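/- Let v, u, w ∈ Q and let 1 ≤ i, k, p ≤ m with i ≠ k and k ≠ p. For all scalars a, b, c, a', b', c' ∈ A satisfying abc = a'b'c' and a²bc = a'²b'c', the triple commutators [E*_{i,a·v}, [E*_{k,b·u}, E_{p,c·w}]] and [E*_{i,a'·v}, [E*_{k,b'·u}, E_{p,c'·w}]] are equal as automorphisms of M. -/

import Mathlib

/-!
For `k ≠ p` the commutator `[E*_{k,u}, E_{p,w}]` fixes `Q` and acts on `H(P)` as the hyperbolic
transvection `x ↦ x + λ x_k e_p`, `f ↦ f − λ f_p e_k` with `λ = ⟨u,w⟩`; in the theorem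
`λ = bc⟨u,w⟩`. Commuting `E*_{i,av}` with this transvection gives the identity when `i ≠ p`,
and for `i = p` a map whose coefficients are `aλ`, `a²λ` and `(aλ)²`. So the triple commutator
only depends on `abc` and `a²bc`.
-/

open QuadraticMap
open scoped commutatorElement

/-- The DSER elementary orthogonal transformation `E_{i,w}` on `M = Q ⊕ P ⊕ P*`,
`P = A^m`:  `E_{i,w}(z,x,f) = (z − f(xᵢ)•w, x + ⟨w,z⟩•xᵢ − f(xᵢ)·q(w)•xᵢ, f)`. -/
noncomputable def Eplus {A Q : Type*} [CommRing A] [AddCommGroup Q] [Module A Q]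
    {m : ℕ} (q : QuadraticForm A Q) (i : Fin m) (w : Q) :
    (Q × (Fin m → A) × (Fin m → A)) ≃ₗ[A] (Q × (Fin m → A) × (Fin m → A)) where
  toFun p := (p.1 - p.2.2 i • w,
    p.2.1 + polar ⇑q w p.1 • (Pi.single i 1 : Fin m → A)
      - (p.2.2 i * q w) • (Pi.single i 1 : Fin m → A),
    p.2.2)
  invFun p := (p.1 + p.2.2 i • w,
    p.2.1 - polar ⇑q w p.1 • (Pi.single i 1 : Fin m → A)
      - (p.2.2 i * q w) • (Pi.single i 1 : Fin m → A),
    p.2.2)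
  map_add' p p' := by
    obtain ⟨z, x, f⟩ := p
    obtain ⟨z', x', f'⟩ := p'
    refine Prod.ext ?_ (Prod.ext ?_ rfl)
    · show z + z' - (f i + f' i) • w = (z - f i • w) + (z' - f' i • w)
      module
    · show x + x' + polar ⇑q w (z + z') • (Pi.single i 1 : Fin m → A)
        - ((f i + f' i) * q w) • (Pi.single i 1 : Fin m → A) = _
      rw [polar_add_right]
      show _ = (x + polar ⇑q w z • (Pi.single i 1 : Fin m → A) - (f i * q w) • (Pi.single i 1 : Fin m → A))
        + (x' + polar ⇑q w z' • (Pi.single i 1 : Fin m → A) - (f' i * q w) • (Pi.single i 1 : Fin m → A))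
      module
  map_smul' a p := by
    obtain ⟨z, x, f⟩ := p
    refine Prod.ext ?_ (Prod.ext ?_ rfl)
    · show a • z - (a • f) i • w = a • (z - f i • w)
      simp only [Pi.smul_apply, smul_eq_mul]
      module
    · show a • x + polar ⇑q w (a • z) • (Pi.single i 1 : Fin m → A)
        - ((a • f) i * q w) • (Pi.single i 1 : Fin m → A)
        = a • (x + polar ⇑q w z • (Pi.single i 1 : Fin m → A) - (f i * q w) • (Pi.single i 1 : Fin m → A))
      rw [polar_smul_right]
      simp only [Pi.smul_apply, smul_eq_mul]
      module
  left_inv p := by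
    obtain ⟨z, x, f⟩ := p
    refine Prod.ext ?_ (Prod.ext ?_ rfl)
    · show z - f i • w + f i • w = z
      module
    · show x + polar ⇑q w z • (Pi.single i 1 : Fin m → A) - (f i * q w) • (Pi.single i 1 : Fin m → A)
        - polar ⇑q w (z - f i • w) • (Pi.single i 1 : Fin m → A)
        - (f i * q w) • (Pi.single i 1 : Fin m → A) = x
      rw [polar_sub_right, polar_smul_right, polar_self]
      simp only [smul_eq_mul]
      module
  right_inv p := by
    obtain ⟨z, x, f⟩ := p
    refine Prod.ext ?_ (Prod.ext ?_ rfl)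
    · show z + f i • w - f i • w = z
      module
    · show x - polar ⇑q w z • (Pi.single i 1 : Fin m → A) - (f i * q w) • (Pi.single i 1 : Fin m → A)
        + polar ⇑q w (z + f i • w) • (Pi.single i 1 : Fin m → A)
        - (f i * q w) • (Pi.single i 1 : Fin m → A) = x
      rw [polar_add_right, polar_smul_right, polar_self]
      simp only [smul_eq_mul]
      module

/-- The DSER elementary orthogonal transformation `E*_{i,w}` on `M = Q ⊕ P ⊕ P*`:
`E*_{i,w}(z,x,f) = (z − fᵢ(x)•w, x, f + ⟨w,z⟩•fᵢ − fᵢ(x)·q(w)•fᵢ)`. -/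
noncomputable def Estar {A Q : Type*} [CommRing A] [AddCommGroup Q] [Module A Q]
    {m : ℕ} (q : QuadraticForm A Q) (i : Fin m) (w : Q) :
    (Q × (Fin m → A) × (Fin m → A)) ≃ₗ[A] (Q × (Fin m → A) × (Fin m → A)) where
  toFun p := (p.1 - p.2.1 i • w,
    p.2.1,
    p.2.2 + polar ⇑q w p.1 • (Pi.single i 1 : Fin m → A)
      - (p.2.1 i * q w) • (Pi.single i 1 : Fin m → A))
  invFun p := (p.1 + p.2.1 i • w,
    p.2.1,
    p.2.2 - polar ⇑q w p.1 • (Pi.single i 1 : Fin m → A)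
      - (p.2.1 i * q w) • (Pi.single i 1 : Fin m → A))
  map_add' p p' := by
    obtain ⟨z, x, f⟩ := p
    obtain ⟨z', x', f'⟩ := p'
    refine Prod.ext ?_ (Prod.ext rfl ?_)
    · show z + z' - (x i + x' i) • w = (z - x i • w) + (z' - x' i • w)
      module
    · show f + f' + polar ⇑q w (z + z') • (Pi.single i 1 : Fin m → A)
        - ((x i + x' i) * q w) • (Pi.single i 1 : Fin m → A) = _
      rw [polar_add_right]
      show _ = (f + polar ⇑q w z • (Pi.single i 1 : Fin m → A)
          - (x i * q w) • (Pi.single i 1 : Fin m → A))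
        + (f' + polar ⇑q w z' • (Pi.single i 1 : Fin m → A)
          - (x' i * q w) • (Pi.single i 1 : Fin m → A))
      module
  map_smul' a p := by
    obtain ⟨z, x, f⟩ := p
    refine Prod.ext ?_ (Prod.ext rfl ?_)
    · show a • z - (a • x) i • w = a • (z - x i • w)
      simp only [Pi.smul_apply, smul_eq_mul]
      module
    · show a • f + polar ⇑q w (a • z) • (Pi.single i 1 : Fin m → A)
        - ((a • x) i * q w) • (Pi.single i 1 : Fin m → A)
        = a • (f + polar ⇑q w z • (Pi.single i 1 : Fin m → A)
          - (x i * q w) • (Pi.single i 1 : Fin m → A))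
      rw [polar_smul_right]
      simp only [Pi.smul_apply, smul_eq_mul]
      module
  left_inv p := by
    obtain ⟨z, x, f⟩ := p
    refine Prod.ext ?_ (Prod.ext rfl ?_)
    · show z - x i • w + x i • w = z
      module
    · show f + polar ⇑q w z • (Pi.single i 1 : Fin m → A)
        - (x i * q w) • (Pi.single i 1 : Fin m → A)
        - polar ⇑q w (z - x i • w) • (Pi.single i 1 : Fin m → A)
        - (x i * q w) • (Pi.single i 1 : Fin m → A) = f
      rw [polar_sub_right, polar_smul_right, polar_self]
      simp only [smul_eq_mul]
      module
  right_inv p := by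
    obtain ⟨z, x, f⟩ := p
    refine Prod.ext ?_ (Prod.ext rfl ?_)
    · show z + x i • w - x i • w = z
      module
    · show f - polar ⇑q w z • (Pi.single i 1 : Fin m → A)
        - (x i * q w) • (Pi.single i 1 : Fin m → A)
        + polar ⇑q w (z + x i • w) • (Pi.single i 1 : Fin m → A)
        - (x i * q w) • (Pi.single i 1 : Fin m → A) = f
      rw [polar_add_right, polar_smul_right, polar_self]
      simp only [smul_eq_mul]
      module

section

variable {A Q : Type*} [CommRing A] [AddCommGroup Q] [Module A Q] {m : ℕ}
  (q : QuadraticForm A Q)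

@[simp]
lemma Estar_apply (i : Fin m) (w z : Q) (x f : Fin m → A) :
    Estar q i w (z, x, f) =
      (z - x i • w, x, f + (polar q w z - x i * q w) • Pi.single i 1) := by
  simp only [Estar, LinearEquiv.coe_mk, LinearMap.coe_mk, AddHom.coe_mk, sub_smul, add_sub_assoc]

@[simp]
lemma Eplus_apply (i : Fin m) (w z : Q) (x f : Fin m → A) :
    Eplus q i w (z, x, f) =
      (z - f i • w, x + (polar q w z - f i * q w) • Pi.single i 1, f) := by
  simp only [Eplus, LinearEquiv.coe_mk, LinearMap.coe_mk, AddHom.coe_mk, sub_smul, add_sub_assoc]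

lemma Estar_inv (i : Fin m) (w : Q) : (Estar q i w)⁻¹ = Estar q i (-w) := by
  refine inv_eq_of_mul_eq_one_right (LinearEquiv.ext fun ⟨z, x, f⟩ => ?_)
  simp only [LinearEquiv.mul_apply, Estar_apply, polar_neg_left, QuadraticMap.map_neg, smul_neg,
    sub_neg_eq_add, polar_add_right, polar_smul_right, polar_self, LinearEquiv.coe_one, id_eq,
    Prod.mk.injEq]
  refine ⟨?_, trivial, ?_⟩ <;> module

lemma Eplus_inv (i : Fin m) (w : Q) : (Eplus q i w)⁻¹ = Eplus q i (-w) := by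
  refine inv_eq_of_mul_eq_one_right (LinearEquiv.ext fun ⟨z, x, f⟩ => ?_)
  simp only [LinearEquiv.mul_apply, Eplus_apply, polar_neg_left, QuadraticMap.map_neg, smul_neg,
    sub_neg_eq_add, polar_add_right, polar_smul_right, polar_self, LinearEquiv.coe_one, id_eq,
    Prod.mk.injEq]
  refine ⟨?_, ?_, trivial⟩ <;> module

variable (Q) in
def hyperbolicTransvection {k p : Fin m} (hkp : k ≠ p) (c : A) :
    (Q × (Fin m → A) × (Fin m → A)) ≃ₗ[A] (Q × (Fin m → A) × (Fin m → A)) where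
  toFun y :=
    (y.1, y.2.1 + (c * y.2.1 k) • Pi.single p 1, y.2.2 - (c * y.2.2 p) • Pi.single k 1)
  invFun y :=
    (y.1, y.2.1 - (c * y.2.1 k) • Pi.single p 1, y.2.2 + (c * y.2.2 p) • Pi.single k 1)
  map_add' y y' := by
    ext <;> simp only [Prod.fst_add, Prod.snd_add, Pi.add_apply, Pi.sub_apply, Pi.smul_apply,
      smul_eq_mul] <;> ring
  map_smul' a y := by
    ext <;> simp only [Prod.smul_fst, Prod.smul_snd, Pi.add_apply, Pi.sub_apply, Pi.smul_apply,
      smul_eq_mul, RingHom.id_apply] <;> ring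
  left_inv y := by ext <;> simp [hkp, hkp.symm]
  right_inv y := by ext <;> simp [hkp, hkp.symm]

@[simp]
lemma hyperbolicTransvection_apply {k p : Fin m} (hkp : k ≠ p) (c : A) (z : Q)
    (x f : Fin m → A) :
    hyperbolicTransvection Q hkp c (z, x, f) =
      (z, x + (c * x k) • Pi.single p 1, f - (c * f p) • Pi.single k 1) := rfl

lemma hyperbolicTransvection_inv {k p : Fin m} (hkp : k ≠ p) (c : A) :
    (hyperbolicTransvection Q hkp c)⁻¹ = hyperbolicTransvection Q hkp (-c) := by
  refine inv_eq_of_mul_eq_one_right (LinearEquiv.ext fun ⟨z, x, f⟩ => ?_)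
  simp [hkp, hkp.symm]

lemma commutator_Estar_Eplus {k p : Fin m} (hkp : k ≠ p) (u w : Q) :
    ⁅Estar q k u, Eplus q p w⁆ = hyperbolicTransvection Q hkp (polar q u w) := by
  ext ⟨z, x, f⟩ : 1
  simp only [commutatorElement_def, Estar_inv, Eplus_inv, LinearEquiv.mul_apply, Estar_apply,
    Eplus_apply, hyperbolicTransvection_apply, Pi.add_apply, Pi.smul_apply,
    Pi.single_eq_of_ne hkp, Pi.single_eq_of_ne hkp.symm, smul_eq_mul, mul_zero, add_zero,
    polar_neg_left, QuadraticMap.map_neg, smul_neg, sub_neg_eq_add, polar_add_right,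
    polar_sub_right, polar_smul_right, polar_self, polar_comm q w u, Prod.mk.injEq]
  refine ⟨?_, ?_, ?_⟩ <;> module

lemma commutator_Estar_hyperbolicTransvection_of_ne {i k p : Fin m} (hip : i ≠ p)
    (hkp : k ≠ p) (v : Q) (c : A) :
    ⁅Estar q i v, hyperbolicTransvection Q hkp c⁆ = 1 := by
  ext ⟨z, x, f⟩ : 1
  simp only [commutatorElement_def, Estar_inv, hyperbolicTransvection_inv, LinearEquiv.mul_apply,
    Estar_apply, hyperbolicTransvection_apply, Pi.add_apply, Pi.sub_apply, Pi.smul_apply,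
    Pi.single_eq_of_ne hip, Pi.single_eq_of_ne hip.symm, Pi.single_eq_of_ne hkp,
    Pi.single_eq_of_ne hkp.symm, smul_eq_mul, mul_zero, add_zero, sub_zero, polar_neg_left,
    QuadraticMap.map_neg, smul_neg, sub_neg_eq_add, polar_add_right, polar_smul_right, polar_self,
    LinearEquiv.coe_one, id_eq, Prod.mk.injEq]
  refine ⟨?_, ?_, ?_⟩ <;> module

lemma commutator_Estar_hyperbolicTransvection_apply {i k : Fin m} (hki : k ≠ i)
    (v : Q) (c : A) (z : Q) (x f : Fin m → A) :
    ⁅Estar q i v, hyperbolicTransvection Q hki c⁆ (z, x, f) =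
      (z - (c * x k) • v, x,
        f - (c * x k * q v) • Pi.single i 1
          + (c * (polar q v z + (x i - c * x k) * q v)) • Pi.single k 1) := by
  simp only [commutatorElement_def, Estar_inv, hyperbolicTransvection_inv, LinearEquiv.mul_apply,
    Estar_apply, hyperbolicTransvection_apply, Pi.add_apply, Pi.sub_apply, Pi.smul_apply,
    Pi.single_eq_same, Pi.single_eq_of_ne hki, Pi.single_eq_of_ne hki.symm, smul_eq_mul,
    mul_one, mul_zero, add_zero, sub_zero, polar_neg_left, QuadraticMap.map_neg, smul_neg,
    sub_neg_eq_add, polar_add_right, polar_smul_right, polar_self, Prod.mk.injEq]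
  refine ⟨?_, ?_, ?_⟩ <;> module

lemma commutator_Estar_smul_hyperbolicTransvection_eq {i k p : Fin m} (hkp : k ≠ p) (v : Q)
    {a c a' c' : A} (h₁ : a * c = a' * c') (h₂ : a ^ 2 * c = a' ^ 2 * c') :
    ⁅Estar q i (a • v), hyperbolicTransvection Q hkp c⁆
      = ⁅Estar q i (a' • v), hyperbolicTransvection Q hkp c'⁆ := by
  obtain rfl | hip := eq_or_ne i p
  · ext ⟨z, x, f⟩ : 1
    simp only [commutator_Estar_hyperbolicTransvection_apply, QuadraticMap.map_smul,
      polar_smul_left, smul_eq_mul, Prod.mk.injEq]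
    refine ⟨?_, trivial, ?_⟩
    · linear_combination (norm := module) -(h₁ • x k • v)
    · linear_combination (norm := module)
        h₂ • ((x i * q v) • Pi.single k 1 - (x k * q v) • Pi.single i 1)
          + h₁ • ((polar q v z - (a * c + a' * c') * x k * q v) • Pi.single k 1)
  · rw [commutator_Estar_hyperbolicTransvection_of_ne q hip,
      commutator_Estar_hyperbolicTransvection_of_ne q hip]

end

theorem triple_commutator_Estar_EstarEplus_scaling_general
    {A Q : Type*} [CommRing A] [AddCommGroup Q] [Module A Q]
    {m : ℕ} (q : QuadraticForm A Q) (i k p : Fin m)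
    (hkp : k ≠ p) (v u w : Q)
    (a b c a' b' c' : A) (h1 : a * b * c = a' * b' * c')
    (h2 : a ^ 2 * b * c = a' ^ 2 * b' * c') :
    ⁅Estar q i (a • v), ⁅Estar q k (b • u), Eplus q p (c • w)⁆⁆
      = ⁅Estar q i (a' • v), ⁅Estar q k (b' • u), Eplus q p (c' • w)⁆⁆ := by
  simp only [commutator_Estar_Eplus q hkp, polar_smul_left, polar_smul_right, smul_eq_mul]
  apply commutator_Estar_smul_hyperbolicTransvection_eq q hkp v
  · linear_combination polar q u w * h1
  · linear_combination polar q u w * h2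

theorem triple_commutator_Estar_EstarEplus_scaling
    {A Q : Type*} [CommRing A] [Invertible (2 : A)] [AddCommGroup Q] [Module A Q]
    {m : ℕ} (q : QuadraticForm A Q) (i k p : Fin m)
    (hik : i ≠ k) (hkp : k ≠ p) (v u w : Q)
    (a b c a' b' c' : A) (h1 : a * b * c = a' * b' * c')
    (h2 : a ^ 2 * b * c = a' ^ 2 * b' * c') :
    ⁅Estar q i (a • v), ⁅Estar q k (b • u), Eplus q p (c • w)⁆⁆
      = ⁅Estar q i (a' • v), ⁅Estar q k (b' • u), Eplus q p (c' • w)⁆⁆ :=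
  triple_commutator_Estar_EstarEplus_scaling_general q i k p hkp v u w a b c a' b' c' h1 h2
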